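/- Let S_{n,k} be the number of signed permutations σ of the multiset {1,1,2,2,...,n,n} (each entry independently signed) with des_B(σ) = k, and T_{n,k} the analogous count for signed permutations of {1,1,...,n,n,n+1} in which the entry n+1 has positive sign. Then T_{n,k} = (k+1) S_{n,k} + (2n-k+1) S_{n,k-1}. -/

import Mathlib

open Polynomial

/-- Number of descents of a word. -/
def des (l : List ℤ) : ℕ := ((l.zip l.tail).filter (fun p => p.2 < p.1)).length

/-- Type-B descents: prepend 0. -/
def desB (l : List ℤ) : ℕ := des (0 :: l)

/-- The multiset {1,1,2,2,...,n,n} as a list. -/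
def baseList (n : ℕ) : List ℤ := (List.range n).flatMap (fun i => [(i : ℤ) + 1, (i : ℤ) + 1])

/-- All distinct arrangements (multiset permutations) of a list. -/
def arrangements (l : List ℤ) : List (List ℤ) := l.permutations.dedup

/-- Descent polynomial over arrangements of `l`. -/
noncomputable def desPoly (l : List ℤ) : Polynomial ℝ :=
  ((arrangements l).map (fun w => (X : Polynomial ℝ) ^ des w)).sum

noncomputable def Ppoly (n : ℕ) : Polynomial ℝ := desPoly (baseList n)

noncomputable def Qpoly (n : ℕ) : Polynomial ℝ := desPoly (baseList n ++ [(n : ℤ) + 1])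

/-- All signings of a word. -/
def signings : List ℤ → List (List ℤ)
  | [] => [[]]
  | a :: t => (signings t).flatMap (fun w => [a :: w, (-a) :: w])

/-- All signed permutations of the multiset given by `l`. -/
def signedWords (l : List ℤ) : List (List ℤ) := (arrangements l).flatMap signings

noncomputable def SpolyB (n : ℕ) : Polynomial ℝ :=
  ((signedWords (baseList n)).map (fun w => (X : Polynomial ℝ) ^ desB w)).sum

/-- Signed permutations of {1,1,...,n,n,n+1} in which n+1 carries a plus sign. -/
def Dwords (n : ℕ) : List (List ℤ) :=
  (signedWords (baseList n ++ [(n : ℤ) + 1])).filter (fun w => ((n : ℤ) + 1) ∈ w)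

noncomputable def TpolyB (n : ℕ) : Polynomial ℝ :=
  ((Dwords n).map (fun w => (X : Polynomial ℝ) ^ desB w)).sum

def PcountZ (n : ℕ) (k : ℤ) : ℕ :=
  ((arrangements (baseList n)).filter (fun w => (des w : ℤ) = k)).length

def QcountN (n : ℕ) (k : ℕ) : ℕ :=
  ((arrangements (baseList n ++ [(n : ℤ) + 1])).filter (fun w => des w = k)).length

def ScountZ (n : ℕ) (k : ℤ) : ℕ :=
  ((signedWords (baseList n)).filter (fun w => (desB w : ℤ) = k)).length

def TcountZ (n : ℕ) (k : ℤ) : ℕ :=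
  ((Dwords n).filter (fun w => (desB w : ℤ) = k)).length

/-! A word counted by `T_{n,k}` is obtained in exactly one way by inserting the letter `n + 1`
into one of the `2n + 1` slots of a signed permutation `σ` counted by some `S_{n,j}`. Reading
`σ` with its leading `0`, the letter `n + 1` exceeds every letter, so inserting it into a descent
slot of `0σ` or at its end keeps `des_B`, whereas each of the other `2n - des_B σ` slots creates
exactly one new descent. Hence `σ` contributes `des_B σ + 1` words with `des_B = des_B σ` and
`2n - des_B σ` words with `des_B = des_B σ + 1`. -/

lemma des_cons_cons (a b : ℤ) (t : List ℤ) :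
    des (a :: b :: t) = (if b < a then 1 else 0) + des (b :: t) := by
  simp only [des, List.zip_cons_cons, List.tail_cons, List.filter_cons]
  split_ifs <;> simp_all [Nat.add_comm]

lemma des_le_length_sub_one (l : List ℤ) : des l ≤ l.length - 1 :=
  (List.length_filter_le _ _).trans (by simp)

theorem des_insertIdx_succ_of_forall_lt {c : ℤ} {m : List ℤ} (hm : m ≠ []) (hc : ∀ x ∈ m, x < c) :
    (((List.range m.length).map fun i => des (m.insertIdx (i + 1) c) : List ℕ) : Multiset ℕ) =
      Multiset.replicate (des m + 1) (des m) +
        Multiset.replicate (m.length - 1 - des m) (des m + 1) := by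
  induction m with
  | nil => exact absurd rfl hm
  | cons a t ih =>
    have hac : ¬ c < a := not_lt.mpr (hc a List.mem_cons_self).le
    rcases t with _ | ⟨b, t⟩
    · simp [des, hac]
    have hbc : b < c := hc b (by simp)
    have hins : (fun i => des ((a :: b :: t).insertIdx (i + 1) c)) ∘ Nat.succ
        = (fun d => (if b < a then 1 else 0) + d) ∘ fun j => des ((b :: t).insertIdx (j + 1) c) :=
      funext fun j => by
        simp only [Function.comp_apply, Nat.succ_eq_add_one, List.insertIdx_succ_cons,
          des_cons_cons]
    rw [List.length_cons, List.range_succ_eq_map, List.map_cons, List.map_map, hins,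
      ← List.map_map, ← Multiset.cons_coe, ← Multiset.map_coe,
      ih (List.cons_ne_nil _ _) fun x hx => hc x (List.mem_cons_of_mem _ hx)]
    simp only [List.insertIdx_succ_cons, List.insertIdx_zero, des_cons_cons, hac, hbc, ↓reduceIte,
      zero_add, Multiset.map_add, Multiset.map_replicate, List.length_cons]
    obtain ⟨e, he⟩ : ∃ e, t.length = des (b :: t) + e :=
      ⟨_, (Nat.add_sub_of_le (by simpa using des_le_length_sub_one (b :: t))).symm⟩
    generalize des (b :: t) = d at he ⊢
    rw [he]
    split_ifs
    · rw [show d + e + 1 + 1 - 1 - (1 + d) = e by omega, show d + e + 1 - 1 - d = e by omega]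
      simp [Multiset.replicate_succ, add_comm, add_left_comm]
    · simp only [zero_add]
      rw [show d + e + 1 + 1 - 1 - d = e + 1 by omega, show d + e + 1 - 1 - d = e by omega]
      simp [Multiset.replicate_succ, add_comm]

theorem desB_insertIdx_of_forall_lt {c : ℤ} {σ : List ℤ} (hc₀ : 0 < c) (hc : ∀ x ∈ σ, x < c) :
    (((List.range (σ.length + 1)).map fun i => desB (σ.insertIdx i c) : List ℕ) : Multiset ℕ) =
      Multiset.replicate (desB σ + 1) (desB σ) +
        Multiset.replicate (σ.length - desB σ) (desB σ + 1) := by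
  simpa [desB, ← List.insertIdx_succ_cons] using
    des_insertIdx_succ_of_forall_lt (List.cons_ne_nil 0 σ) (List.forall_mem_cons.2 ⟨hc₀, hc⟩)

lemma countP_desB_insertIdx {σ : List ℤ} {c : ℤ} (hc₀ : 0 < c) (hc : ∀ x ∈ σ, x < c) (k : ℤ) :
    ((((List.range (σ.length + 1)).map fun i => σ.insertIdx i c).countP
        fun w => (desB w : ℤ) = k : ℕ) : ℤ) =
      (if (desB σ : ℤ) = k then k + 1 else 0) +
        (if (desB σ : ℤ) = k - 1 then σ.length - k + 1 else 0) := by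
  have h := congrArg (Multiset.countP fun d : ℕ => (d : ℤ) = k) (desB_insertIdx_of_forall_lt hc₀ hc)
  simp only [← Multiset.coe_replicate, Multiset.coe_countP, Multiset.countP_add, List.countP_map,
    List.countP_replicate] at h
  have hle : desB σ ≤ σ.length := by simpa [desB] using des_le_length_sub_one (0 :: σ)
  rw [List.countP_map]
  refine (congrArg (Nat.cast : ℕ → ℤ) h).trans ?_
  simp only [decide_eq_true_eq]
  push_cast
  split_ifs <;> omega

section InsertIdx

variable {α : Type*} [DecidableEq α]

lemma idxOf_insertIdx_of_notMem {c : α} {σ : List α} {i : ℕ} (hc : c ∉ σ) (hi : i ≤ σ.length) :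
    (σ.insertIdx i c).idxOf c = i := by
  induction σ generalizing i with
  | nil => simp_all
  | cons a t ih =>
    rw [List.mem_cons, not_or] at hc
    cases i with
    | zero => simp
    | succ j =>
      rw [List.insertIdx_succ_cons, List.idxOf_cons_ne _ (Ne.symm hc.1),
        ih hc.2 (by simpa using hi)]

lemma nodup_flatMap_insertIdx {L : List (List α)} {c : α} {n : ℕ} (hL : L.Nodup)
    (hc : ∀ σ ∈ L, c ∉ σ ∧ σ.length = n) :
    (L.flatMap fun σ => (List.range (n + 1)).map fun i => σ.insertIdx i c).Nodup := by
  have hidx {σ i} (hσ : σ ∈ L) (hi : i ∈ List.range (n + 1)) : (σ.insertIdx i c).idxOf c = i :=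
    idxOf_insertIdx_of_notMem (hc σ hσ).1
      (by rw [(hc σ hσ).2]; exact Nat.lt_succ_iff.1 (List.mem_range.1 hi))
  rw [List.nodup_flatMap]
  refine ⟨fun σ hσ => List.nodup_range.map_on fun i hi i' hi' h => ?_,
    hL.imp_of_mem fun {σ σ'} hσ hσ' hne w hw hw' => hne ?_⟩
  · rw [← hidx hσ hi, h, hidx hσ hi']
  · obtain ⟨i, hi, rfl⟩ := List.mem_map.1 hw
    obtain ⟨i', hi', h⟩ := List.mem_map.1 hw'
    obtain rfl : i' = i := by rw [← hidx hσ hi, ← hidx hσ' hi', h]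
    rw [← List.eraseIdx_insertIdx_self (l := σ) (i := i') c, ← h, List.eraseIdx_insertIdx_self]

end InsertIdx

lemma mem_signings {w v : List ℤ} (hw : ∀ x ∈ w, 0 ≤ x) :
    v ∈ signings w ↔ v.map abs = w := by
  induction w generalizing v with
  | nil => simp [signings]
  | cons a t ih =>
    rw [List.forall_mem_cons] at hw
    cases v with
    | nil => simp [signings]
    | cons x u =>
      simp only [signings, List.mem_flatMap, List.mem_pair, List.cons.injEq, ih hw.2,
        List.map_cons, abs_eq hw.1]
      grind

lemma signings_nodup {w : List ℤ} (hw : ∀ x ∈ w, x ≠ 0) : (signings w).Nodup := by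
  induction w with
  | nil => simp [signings]
  | cons a t ih =>
    rw [List.forall_mem_cons] at hw
    rw [signings, List.nodup_flatMap]
    refine ⟨fun _ _ => by simpa [self_eq_neg] using hw.1, (ih hw.2).imp fun huu => ?_⟩
    simp [Ne.symm huu]

lemma mem_arrangements {l w : List ℤ} : w ∈ arrangements l ↔ w.Perm l := by
  simp [arrangements]

lemma mem_signedWords {l v : List ℤ} (hl : ∀ x ∈ l, 0 ≤ x) :
    v ∈ signedWords l ↔ (v.map abs).Perm l := by
  simp only [signedWords, List.mem_flatMap, mem_arrangements]
  constructor
  · rintro ⟨w, hw, hv⟩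
    rwa [(mem_signings fun x hx => hl x (hw.subset hx)).1 hv]
  · exact fun h => ⟨_, h, (mem_signings (by simp)).2 rfl⟩

lemma signedWords_nodup {l : List ℤ} (hl : ∀ x ∈ l, 0 < x) : (signedWords l).Nodup := by
  rw [signedWords, List.nodup_flatMap]
  have hpos {w} (hw : w ∈ arrangements l) : ∀ x ∈ w, 0 < x :=
    fun x hx => hl x ((mem_arrangements.1 hw).subset hx)
  refine ⟨fun w hw => signings_nodup fun x hx => (hpos hw x hx).ne',
    (List.nodup_dedup _).imp_of_mem fun hw hw' hne v hv hv' => hne ?_⟩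
  rw [← (mem_signings fun x hx => (hpos hw x hx).le).1 hv,
    (mem_signings fun x hx => (hpos hw' x hx).le).1 hv']

lemma length_of_mem_signedWords {l σ : List ℤ} (hl : ∀ x ∈ l, 0 ≤ x) (hσ : σ ∈ signedWords l) :
    σ.length = l.length := by
  simpa using ((mem_signedWords hl).1 hσ).length_eq

lemma abs_mem_of_mem_signedWords {l σ : List ℤ} {x : ℤ} (hl : ∀ x ∈ l, 0 ≤ x)
    (hσ : σ ∈ signedWords l) (hx : x ∈ σ) : |x| ∈ l :=
  ((mem_signedWords hl).1 hσ).subset (List.mem_map_of_mem hx)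

theorem filter_mem_signedWords_append_perm {l : List ℤ} {c : ℤ} (hl : ∀ x ∈ l, 0 < x)
    (hc : 0 < c) (hcl : c ∉ l) :
    ((signedWords (l ++ [c])).filter fun w => c ∈ w).Perm
      ((signedWords l).flatMap fun σ =>
        (List.range (l.length + 1)).map fun i => σ.insertIdx i c) := by
  have hl₀ : ∀ x ∈ l, 0 ≤ x := fun x hx => (hl x hx).le
  have hlc : ∀ x ∈ l ++ [c], 0 < x := by simpa [or_imp, forall_and] using ⟨hl, hc⟩
  have habs (σ : List ℤ) : (c :: σ).map abs = c :: σ.map abs := by simp [abs_of_pos hc]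
  refine (List.perm_ext_iff_of_nodup ((signedWords_nodup hlc).filter _)
    (nodup_flatMap_insertIdx (signedWords_nodup hl)
      fun σ hσ => ⟨fun hcσ => hcl (by
          simpa [abs_of_pos hc] using abs_mem_of_mem_signedWords hl₀ hσ hcσ),
        length_of_mem_signedWords hl₀ hσ⟩)).2 fun w => ?_
  simp only [List.mem_filter, mem_signedWords fun x hx => (hlc x hx).le, decide_eq_true_eq,
    List.mem_flatMap, mem_signedWords hl₀, List.mem_map, List.mem_range, Nat.lt_succ_iff]
  constructor
  · rintro ⟨hw, hcw⟩
    have hi : w.idxOf c < w.length := List.idxOf_lt_length_iff.2 hcw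
    have hw' : (w.eraseIdx (w.idxOf c)).insertIdx (w.idxOf c) c = w := by
      conv_rhs => rw [← List.insertIdx_eraseIdx_getElem hi, List.getElem_idxOf hi]
    have hlen : w.length = l.length + 1 := by simpa using hw.length_eq
    have hperm := List.perm_insertIdx c (w.eraseIdx (w.idxOf c)) (i := w.idxOf c)
      (by rw [List.length_eraseIdx_of_lt hi]; omega)
    rw [hw'] at hperm
    refine ⟨_, List.Perm.cons_inv (a := c) ?_, _, by omega, hw'⟩
    rw [← habs]
    exact (hperm.map abs).symm.trans (hw.trans (List.perm_append_singleton c l))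
  · rintro ⟨σ, hσ, i, hi, rfl⟩
    have hperm := List.perm_insertIdx c σ (hi.trans_eq (by simpa using hσ.length_eq.symm))
    refine ⟨(hperm.map abs).trans ?_, hperm.mem_iff.2 List.mem_cons_self⟩
    rw [habs]
    exact (hσ.cons c).trans (List.perm_append_singleton c l).symm

lemma mem_baseList {n : ℕ} {x : ℤ} : x ∈ baseList n ↔ 1 ≤ x ∧ x ≤ n := by
  simp only [baseList, List.pure_def, List.bind_eq_flatMap, List.mem_flatMap, List.mem_range,
    List.mem_cons, List.not_mem_nil, or_false, or_self, ↓existsAndEq, and_true]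
  constructor
  · rintro ⟨a, ha, rfl⟩
    omega
  · exact fun h => ⟨(x - 1).toNat, by omega, by omega⟩

lemma length_baseList (n : ℕ) : (baseList n).length = 2 * n := by
  simp [baseList, List.length_flatMap, mul_comm]

lemma lt_of_mem_signedWords_baseList {n : ℕ} {σ : List ℤ} (hσ : σ ∈ signedWords (baseList n))
    {x : ℤ} (hx : x ∈ σ) : x < n + 1 := by
  have hmem := abs_mem_of_mem_signedWords (fun y hy => by linarith [mem_baseList.1 hy]) hσ hx
  linarith [le_abs_self x, mem_baseList.1 hmem]

lemma sum_map_ite_eq_mul_countP {α R : Type*} [NonAssocSemiring R] (p : α → Prop)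
    [DecidablePred p] (r : R) (l : List α) :
    (l.map fun a => if p a then r else 0).sum = r * l.countP fun a => p a := by
  simp [List.sum_map_ite, List.countP_eq_length_filter, Nat.cast_comm]

theorem stmt10_general (n : ℕ) (k : ℤ) :
    (TcountZ n k : ℤ) = (k + 1) * (ScountZ n k : ℤ)
      + (2 * (n : ℤ) - k + 1) * (ScountZ n (k - 1) : ℤ) := by
  have hpos : ∀ x ∈ baseList n, 0 < x := fun x hx => by linarith [mem_baseList.1 hx]
  have hcount : ∀ σ ∈ signedWords (baseList n),
      ((((List.range ((baseList n).length + 1)).map fun i => σ.insertIdx i ((n : ℤ) + 1)).countP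
          fun w => (desB w : ℤ) = k : ℕ) : ℤ) =
        (if (desB σ : ℤ) = k then k + 1 else 0) +
          (if (desB σ : ℤ) = k - 1 then 2 * n - k + 1 else 0) := fun σ hσ => by
    have hlen := length_of_mem_signedWords (fun x hx => (hpos x hx).le) hσ
    rw [← hlen, countP_desB_insertIdx (by positivity) fun x => lt_of_mem_signedWords_baseList hσ,
      hlen, length_baseList]
    push_cast
    rfl
  rw [TcountZ, Dwords, ← List.countP_eq_length_filter,
    (filter_mem_signedWords_append_perm hpos (by positivity)
      fun h => by linarith [mem_baseList.1 h]).countP_eq,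
    List.countP_flatMap, Nat.cast_list_sum, List.map_map]
  refine (congrArg List.sum (List.map_congr_left hcount)).trans ?_
  rw [List.sum_map_add, sum_map_ite_eq_mul_countP, sum_map_ite_eq_mul_countP, ScountZ, ScountZ,
    List.countP_eq_length_filter, List.countP_eq_length_filter]

/-- T_{n,k} = (k+1) S_{n,k} + (2n-k+1) S_{n,k-1}, where S_{n,k} counts signed
permutations of {1,1,…,n,n} with k type-B descents and T_{n,k} counts signed
permutations of {1,1,…,n,n,n+1} (with n+1 positively signed) with k type-B descents. -/
theorem stmt10 (n : ℕ) (hn : 1 ≤ n) (k : ℤ) :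
    (TcountZ n k : ℤ) = (k + 1) * (ScountZ n k : ℤ)
      + (2 * (n : ℤ) - k + 1) * (ScountZ n (k - 1) : ℤ) :=
  stmt10_general n k
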